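/- Let P be a finite ground normal program. Every answer set of the WF reduct P^WF is an answer set of P. -/
import Mathlib


open scoped Classical

/-- A ground normal rule: a head atom, a finite positive body and a finite negative body. -/
structure GRule (α : Type) where
  head : α
  pos : Finset α
  neg : Finset α

namespace ASP

variable {α ι : Type}

/-- The Gelfond–Lifschitz reduct of a program `P` w.r.t. an interpretation `I`:
the set of positive rules `(head r, pos r)` for rules whose negative body avoids `I`. -/
def glReduct (P : Set (GRule α)) (I : Set α) : Set (α × Finset α) :=
  {hb | ∃ r ∈ P, (∀ c ∈ r.neg, c ∉ I) ∧ hb = (r.head, r.pos)}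

/-- `J` is a model of a set of positive rules `Q`. -/
def IsModelPos (Q : Set (α × Finset α)) (J : Set α) : Prop :=
  ∀ hb ∈ Q, (∀ b ∈ hb.2, b ∈ J) → hb.1 ∈ J

/-- `A` is an answer set (stable model) of `P`. -/
def IsAnswerSet (P : Set (GRule α)) (A : Set α) : Prop :=
  IsModelPos (glReduct P A) A ∧ ∀ B, B ⊂ A → ¬ IsModelPos (glReduct P A) B

/-- The set of answer sets of `P`. -/
def AS (P : Set (GRule α)) : Set (Set α) := {A | IsAnswerSet P A}

/-- Operator deriving new true atoms, given a three-valued interpretation `I = (I_T, I_F)`. -/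
def opTrue (P : Set (GRule α)) (I : Set α × Set α) : Set α →o Set α where
  toFun T := {a | a ∉ I.1 ∧ ∃ r ∈ P, r.head = a ∧ (∀ b ∈ r.pos, b ∈ I.1 ∪ T) ∧
    ∀ c ∈ r.neg, c ∈ I.2}
  monotone' := by
    intro T T' hT a ha
    obtain ⟨h1, r, hr, hh, hp, hn⟩ := ha
    exact ⟨h1, r, hr, hh, fun b hb => (hp b hb).imp id fun h => hT h, hn⟩

/-- Operator deriving new false atoms, given a three-valued interpretation `I = (I_T, I_F)`. -/
def opFalse (P : Set (GRule α)) (I : Set α × Set α) : Set α →o Set α where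
  toFun F := {a | a ∉ I.2 ∧ ∀ r ∈ P, r.head = a →
    (∃ b ∈ r.pos, b ∈ I.2 ∪ F) ∨ ∃ c ∈ r.neg, c ∈ I.1}
  monotone' := by
    intro F F' hF a ha
    refine ⟨ha.1, fun r hr hh => ?_⟩
    rcases ha.2 r hr hh with ⟨b, hb, hbm⟩ | h
    · exact Or.inl ⟨b, hb, hbm.imp id fun h => hF h⟩
    · exact Or.inr h

/-- The iterated fixpoint operator: `IFP(I) = I ⊔ (lfp (opTrue I), gfp (opFalse I))`. -/
def IFP (P : Set (GRule α)) (I : Set α × Set α) : Set α × Set α :=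
  I ⊔ (OrderHom.lfp (opTrue P I), OrderHom.gfp (opFalse P I))

/-- The well-founded model of `P`: the least fixpoint of `IFP`
(as the infimum of all prefixpoints of the monotone operator `IFP`). -/
def WFM (P : Set (GRule α)) : Set α × Set α :=
  sInf {I | IFP P I ≤ I}

/-- The WF reduct of `P`: delete rules whose positive body meets the false atoms or whose
negative body meets the true atoms of the WFM, and remove from the remaining rules the
true atoms from positive bodies and the false atoms from negative bodies. -/
noncomputable def WFreduct (P : Set (GRule α)) : Set (GRule α) :=
  {r' | ∃ r ∈ P, (∀ b ∈ r.pos, b ∉ (WFM P).2) ∧ (∀ c ∈ r.neg, c ∉ (WFM P).1) ∧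
    r' = ⟨r.head, r.pos.filter (fun b => b ∉ (WFM P).1),
          r.neg.filter (fun c => c ∉ (WFM P).2)⟩}

/-- The set of atoms occurring in a set of rules (as heads or in bodies). -/
def atomsOf (R : Set (GRule α)) : Set α :=
  {a | ∃ r ∈ R, a = r.head ∨ a ∈ r.pos ∨ a ∈ r.neg}

/-- `R` is a relevance-closed subprogram of `P`. -/
def RelevanceClosed (P R : Set (GRule α)) : Prop :=
  R ⊆ P ∧ ∀ r ∈ P, r.head ∈ atomsOf R → r ∈ R

/-- Signed edge of the dependency graph of `P`; `s = true` marks a negative edge. -/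
def Edge (P : Set (GRule α)) (x y : α) (s : Bool) : Prop :=
  ∃ r ∈ P, r.head = x ∧ ((s = false ∧ y ∈ r.pos) ∨ (s = true ∧ y ∈ r.neg))

/-- `Reaches P x y b`: there is a nonempty walk in the signed dependency graph from `x`
to `y` whose number of negative edges has parity `b` (`true` = odd). -/
inductive Reaches (P : Set (GRule α)) : α → α → Bool → Prop
  | single {x y s} : Edge P x y s → Reaches P x y s
  | step {x y z s t} : Edge P x y s → Reaches P y z t → Reaches P x z (xor s t)

/-- `P` has no odd loops over negation. -/
def OLONFree (P : Set (GRule α)) : Prop := ∀ a : α, ¬ Reaches P a a true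

/-- The program of a world `w`: `P₀` plus the facts `aᵢ` for `i ∈ w`. -/
def worldProg (P0 : Set (GRule α)) (atom : ι → α) (w : Finset ι) : Set (GRule α) :=
  P0 ∪ {r | ∃ i ∈ w, r = ⟨atom i, ∅, ∅⟩}

/-- The probability of a world `w` of a PASP with index set `S`. -/
noncomputable def worldP (prob : ι → ℝ) (S w : Finset ι) : ℝ :=
  (∏ i ∈ w, prob i) * ∏ i ∈ S \ w, (1 - prob i)

/-- The upper probability of a query `q` in the PASP `(P₀, S, atom, prob)`. -/
noncomputable def UP (P0 : Set (GRule α)) (atom : ι → α) (prob : ι → ℝ)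
    (S : Finset ι) (q : α) : ℝ :=
  ∑ w ∈ S.powerset.filter (fun w => ∃ A ∈ AS (worldProg P0 atom w), q ∈ A),
    worldP prob S w

/-- The lower probability of a query `q` in the PASP `(P₀, S, atom, prob)`. -/
noncomputable def LP (P0 : Set (GRule α)) (atom : ι → α) (prob : ι → ℝ)
    (S : Finset ι) (q : α) : ℝ :=
  ∑ w ∈ S.powerset.filter (fun w => ∀ A ∈ AS (worldProg P0 atom w), q ∈ A),
    worldP prob S w

/-- `(P₀, S, atom, prob)` is a PASP: `P₀` is finite, the probabilistic atoms are pairwise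
distinct, none of them is the head of a rule of `P₀`, and probabilities lie in `[0,1]`. -/
def IsPASP (P0 : Set (GRule α)) (atom : ι → α) (prob : ι → ℝ) (S : Finset ι) : Prop :=
  P0.Finite ∧ Set.InjOn atom ↑S ∧ (∀ i ∈ S, ∀ r ∈ P0, r.head ≠ atom i) ∧
    ∀ i ∈ S, prob i ∈ Set.Icc (0 : ℝ) 1

end ASP


namespace ASP

variable {α : Type}

open OrderHom

lemma mem_opTrue {P : Set (GRule α)} {I : Set α × Set α} {T : Set α} {a : α} :
    a ∈ opTrue P I T ↔ a ∉ I.1 ∧ ∃ r ∈ P, r.head = a ∧ (∀ b ∈ r.pos, b ∈ I.1 ∪ T) ∧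
      ∀ c ∈ r.neg, c ∈ I.2 := Iff.rfl

lemma mem_opFalse {P : Set (GRule α)} {I : Set α × Set α} {F : Set α} {a : α} :
    a ∈ opFalse P I F ↔ a ∉ I.2 ∧ ∀ r ∈ P, r.head = a →
      (∃ b ∈ r.pos, b ∈ I.2 ∪ F) ∨ ∃ c ∈ r.neg, c ∈ I.1 := Iff.rfl

lemma ifp_mono (P : Set (GRule α)) : Monotone (IFP P) := by
  intro I J hIJ
  have h1 : lfp (opTrue P I) ≤ J.1 ∪ lfp (opTrue P J) := by
    apply lfp_le
    rintro a ⟨haI, r, hrP, hh, hp, hn⟩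
    by_cases haJ : a ∈ J.1
    · exact Or.inl haJ
    · right
      rw [← map_lfp (opTrue P J)]
      refine ⟨haJ, r, hrP, hh, ?_, fun c hc => hIJ.2 (hn c hc)⟩
      intro b hb
      rcases hp b hb with h | h
      · exact Or.inl (hIJ.1 h)
      · rcases h with h | h
        · exact Or.inl h
        · exact Or.inr h
  have h2 : gfp (opFalse P I) ≤ J.2 ∪ gfp (opFalse P J) := by
    have key : gfp (opFalse P I) \ J.2 ≤ gfp (opFalse P J) := by
      apply le_gfp
      rintro a ⟨haG, haJ2⟩
      have ha : a ∈ opFalse P I (gfp (opFalse P I)) := by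
        rw [map_gfp]; exact haG
      refine ⟨haJ2, fun r hrP hh => ?_⟩
      rcases ha.2 r hrP hh with ⟨b, hb, hbm⟩ | ⟨c, hc, hcm⟩
      · left
        refine ⟨b, hb, ?_⟩
        rcases hbm with h | h
        · exact Or.inl (hIJ.2 h)
        · by_cases hbJ : b ∈ J.2
          · exact Or.inl hbJ
          · exact Or.inr ⟨h, hbJ⟩
      · exact Or.inr ⟨c, hc, hIJ.1 hcm⟩
    intro a ha
    by_cases haJ : a ∈ J.2
    · exact Or.inl haJ
    · exact Or.inr (key ⟨ha, haJ⟩)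
  have e1 : (J ⊔ ((lfp (opTrue P J), gfp (opFalse P J)) : Set α × Set α)).1
      = J.1 ∪ lfp (opTrue P J) := rfl
  have e2 : (J ⊔ ((lfp (opTrue P J), gfp (opFalse P J)) : Set α × Set α)).2
      = J.2 ∪ gfp (opFalse P J) := rfl
  refine sup_le (hIJ.trans le_sup_left) (Prod.le_def.mpr ⟨?_, ?_⟩)
  · exact h1.trans (le_of_eq e1.symm)
  · exact h2.trans (le_of_eq e2.symm)

lemma wfm_prefix (P : Set (GRule α)) : IFP P (WFM P) ≤ WFM P := by
  apply le_sInf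
  intro J hJ
  exact le_trans (ifp_mono P (sInf_le hJ)) hJ

lemma wfm_le {P : Set (GRule α)} {J : Set α × Set α} (hJ : IFP P J ≤ J) : WFM P ≤ J :=
  sInf_le hJ

lemma lfp_opTrue_wfm_le (P : Set (GRule α)) :
    lfp (opTrue P (WFM P)) ≤ (WFM P).1 :=
  ((le_sup_right.trans (wfm_prefix P)) :
    ((lfp (opTrue P (WFM P)), gfp (opFalse P (WFM P))) : Set α × Set α) ≤ WFM P).1

lemma gfp_opFalse_wfm_le (P : Set (GRule α)) :
    gfp (opFalse P (WFM P)) ≤ (WFM P).2 :=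
  ((le_sup_right.trans (wfm_prefix P)) :
    ((lfp (opTrue P (WFM P)), gfp (opFalse P (WFM P))) : Set α × Set α) ≤ WFM P).2

/-- The one-step provability operator of the GL reduct w.r.t. `S`. -/
def theta (P : Set (GRule α)) (S : Set α) : Set α →o Set α where
  toFun X := {a | ∃ r ∈ P, r.head = a ∧ (∀ b ∈ r.pos, b ∈ X) ∧ ∀ c ∈ r.neg, c ∉ S}
  monotone' := by
    rintro X Y hXY a ⟨r, hr, hh, hp, hn⟩
    exact ⟨r, hr, hh, fun b hb => hXY (hp b hb), hn⟩

/-- The least model of the GL reduct w.r.t. `S`. -/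
def gam (P : Set (GRule α)) (S : Set α) : Set α := lfp (theta P S)

lemma theta_gam (P : Set (GRule α)) (S : Set α) : theta P S (gam P S) = gam P S :=
  map_lfp (theta P S)

lemma gam_anti (P : Set (GRule α)) : Antitone (gam P) := by
  intro S S' h
  apply lfp_le
  rintro a ⟨r, hr, hh, hp, hn⟩
  rw [gam, ← map_lfp (theta P S)]
  exact ⟨r, hr, hh, hp, fun c hc hcS => hn c hc (h hcS)⟩

/-- The squared (monotone) GL operator. -/
def gam2 (P : Set (GRule α)) : Set α →o Set α where
  toFun S := gam P (gam P S)
  monotone' := fun S S' h => gam_anti P (gam_anti P h)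

/-- Consistency of the well-founded model. -/
lemma wfm_consistent (P : Set (GRule α)) : ∀ a ∈ (WFM P).1, a ∉ (WFM P).2 := by
  set T : Set α := lfp (gam2 P) with hT
  set U : Set α := gam P T with hU
  have hgam2T : gam P (gam P T) = T := map_lfp (gam2 P)
  have hgamU : gam P U = T := hgam2T
  have hTU : T ≤ U := by
    apply lfp_le_fixed (gam2 P)
    show gam P (gam P U) = U
    rw [hgamU]
  -- J* = (T, Uᶜ) is a prefixpoint of IFP
  have hpre : IFP P ((T, Uᶜ) : Set α × Set α) ≤ (T, Uᶜ) := by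
    have h1 : lfp (opTrue P ((T, Uᶜ) : Set α × Set α)) ≤ T := by
      apply lfp_le
      rintro a ⟨haT, r, hrP, hh, hp, hn⟩
      have : a ∈ theta P U (gam P U) := by
        refine ⟨r, hrP, hh, ?_, ?_⟩
        · intro b hb
          rw [hgamU]
          rcases hp b hb with h | h
          · exact h
          · exact h
        · intro c hc
          exact hn c hc
      rw [theta_gam P U] at this
      rw [← hgamU]
      exact this
    have h2 : gfp (opFalse P ((T, Uᶜ) : Set α × Set α)) ≤ Uᶜ := by
      set G : Set α := gfp (opFalse P ((T, Uᶜ) : Set α × Set α)) with hG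
      have hUG : U ≤ {x | x ∈ U ∧ x ∉ G} := by
        apply lfp_le
        rintro a ⟨r, hrP, hh, hp, hn⟩
        constructor
        · have : a ∈ theta P T (gam P T) := by
            refine ⟨r, hrP, hh, fun b hb => (hp b hb).1, hn⟩
          rw [theta_gam P T] at this
          rw [hU]
          exact this
        · intro haG
          have ha : a ∈ opFalse P ((T, Uᶜ) : Set α × Set α) G := by
            rw [hG, map_gfp]; exact haG
          rcases ha.2 r hrP hh with ⟨b, hb, hbm⟩ | ⟨c, hc, hcm⟩
          · rcases hbm with h | h
            · exact h (hp b hb).1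
            · exact (hp b hb).2 h
          · exact hn c hc hcm
      intro a haG haU
      exact (hUG haU).2 haG
    refine sup_le le_rfl ⟨h1, h2⟩
  have hle := wfm_le hpre
  intro a ha1 ha2
  exact (hle.2 ha2) (hTU (hle.1 ha1))

/-- Unfoundedness of the false part of the WFM. -/
lemma wfm_false_unfounded (P : Set (GRule α)) :
    ∀ a ∈ (WFM P).2, ∀ r ∈ P, r.head = a →
      (∃ b ∈ r.pos, b ∈ (WFM P).2) ∨ ∃ c ∈ r.neg, c ∈ (WFM P).1 := by
  set W := WFM P with hW
  set Fhat : Set α := {a | ∀ r ∈ P, r.head = a →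
    (∃ b ∈ r.pos, b ∈ W.2) ∨ ∃ c ∈ r.neg, c ∈ W.1} with hFhat
  have hpre : IFP P ((W.1, W.2 ∩ Fhat) : Set α × Set α) ≤ (W.1, W.2 ∩ Fhat) := by
    have h1 : lfp (opTrue P ((W.1, W.2 ∩ Fhat) : Set α × Set α)) ≤ W.1 := by
      apply lfp_le
      rintro a ⟨haW, r, hrP, hh, hp, hn⟩
      exfalso
      apply haW
      apply lfp_opTrue_wfm_le P
      rw [← map_lfp (opTrue P (WFM P))]
      refine ⟨haW, r, hrP, hh, ?_, fun c hc => (hn c hc).1⟩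
      intro b hb
      rcases hp b hb with h | h
      · exact Or.inl h
      · exact Or.inl h
    have h2 : gfp (opFalse P ((W.1, W.2 ∩ Fhat) : Set α × Set α)) ≤ W.2 ∩ Fhat := by
      set G : Set α := gfp (opFalse P ((W.1, W.2 ∩ Fhat) : Set α × Set α)) with hG
      have hGmem : ∀ a ∈ G, a ∉ (W.2 ∩ Fhat : Set α) ∧ ∀ r ∈ P, r.head = a →
          (∃ b ∈ r.pos, b ∈ (W.2 ∩ Fhat : Set α) ∪ G) ∨ ∃ c ∈ r.neg, c ∈ W.1 := by
        intro a ha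
        have : a ∈ opFalse P ((W.1, W.2 ∩ Fhat) : Set α × Set α) G := by
          rw [hG, map_gfp]; exact ha
        exact this
      have hGW2 : G ≤ W.2 := by
        have key : G \ W.2 ≤ gfp (opFalse P W) := by
          apply le_gfp
          rintro a ⟨haG, haW2⟩
          obtain ⟨-, hrules⟩ := hGmem a haG
          refine ⟨haW2, fun r hrP hh => ?_⟩
          rcases hrules r hrP hh with ⟨b, hb, hbm⟩ | hc
          · left
            refine ⟨b, hb, ?_⟩
            rcases hbm with h | h
            · exact Or.inl h.1
            · by_cases hbW : b ∈ W.2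
              · exact Or.inl hbW
              · exact Or.inr ⟨h, hbW⟩
          · exact Or.inr hc
        intro a haG
        by_contra haW2
        exact haW2 (gfp_opFalse_wfm_le P (key ⟨haG, haW2⟩))
      intro a haG
      obtain ⟨-, hrules⟩ := hGmem a haG
      refine ⟨hGW2 haG, fun r hrP hh => ?_⟩
      rcases hrules r hrP hh with ⟨b, hb, hbm⟩ | hc
      · left
        refine ⟨b, hb, ?_⟩
        rcases hbm with h | h
        · exact h.1
        · exact hGW2 h
      · exact Or.inr hc
    refine sup_le le_rfl ⟨h1, h2⟩
  have hle := wfm_le hpre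
  intro a ha
  exact (hle.2 ha).2

/-- The supported-derivation operator relative to the false set `F`. -/
def suppOp (P : Set (GRule α)) (F : Set α) : Set α →o Set α where
  toFun X := {a | ∃ r ∈ P, r.head = a ∧ (∀ b ∈ r.pos, b ∈ X) ∧ ∀ c ∈ r.neg, c ∈ F}
  monotone' := by
    rintro X Y hXY a ⟨r, hr, hh, hp, hn⟩
    exact ⟨r, hr, hh, fun b hb => hXY (hp b hb), hn⟩

/-- The true part of the WFM is well-foundedly derivable. -/
lemma wfm_true_derivable (P : Set (GRule α)) :
    (WFM P).1 ≤ lfp (suppOp P (WFM P).2) := by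
  set W := WFM P with hW
  set L : Set α := lfp (suppOp P W.2) with hL
  have hpre : IFP P ((W.1 ∩ L, W.2) : Set α × Set α) ≤ (W.1 ∩ L, W.2) := by
    have h1 : lfp (opTrue P ((W.1 ∩ L, W.2) : Set α × Set α)) ≤ W.1 ∩ L := by
      apply lfp_le
      rintro a ⟨haJ, r, hrP, hh, hp, hn⟩
      have hpos : ∀ b ∈ r.pos, b ∈ (W.1 ∩ L : Set α) := by
        intro b hb
        rcases hp b hb with h | h
        · exact h
        · exact h
      have haL : a ∈ L := by
        rw [hL, ← map_lfp (suppOp P W.2)]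
        exact ⟨r, hrP, hh, fun b hb => (hpos b hb).2, hn⟩
      by_cases haW : a ∈ W.1
      · exact ⟨haW, haL⟩
      · exfalso
        apply haW
        apply lfp_opTrue_wfm_le P
        rw [← map_lfp (opTrue P (WFM P))]
        exact ⟨haW, r, hrP, hh, fun b hb => Or.inl (hpos b hb).1, hn⟩
    have h2 : gfp (opFalse P ((W.1 ∩ L, W.2) : Set α × Set α)) ≤ W.2 := by
      have key : gfp (opFalse P ((W.1 ∩ L, W.2) : Set α × Set α)) ≤ gfp (opFalse P W) := by
        apply le_gfp
        intro a ha
        have ha' : a ∈ opFalse P ((W.1 ∩ L, W.2) : Set α × Set α)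
            (gfp (opFalse P ((W.1 ∩ L, W.2) : Set α × Set α))) := by
          rw [map_gfp]; exact ha
        refine ⟨ha'.1, fun r hrP hh => ?_⟩
        rcases ha'.2 r hrP hh with ⟨b, hb, hbm⟩ | ⟨c, hc, hcm⟩
        · exact Or.inl ⟨b, hb, hbm⟩
        · exact Or.inr ⟨c, hc, hcm.1⟩
      exact key.trans (gfp_opFalse_wfm_le P)
    refine sup_le le_rfl ⟨h1, h2⟩
  intro a ha
  exact ((wfm_le hpre).1 ha).2

/-- The derivable atoms avoid the false part of the WFM. -/
lemma suppOp_lfp_not_false (P : Set (GRule α)) :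
    ∀ a ∈ lfp (suppOp P (WFM P).2), a ∉ (WFM P).2 := by
  have h : lfp (suppOp P (WFM P).2) ≤ ((WFM P).2)ᶜ := by
    apply lfp_le
    rintro a ⟨r, hrP, hh, hp, hn⟩
    intro haF
    rcases wfm_false_unfounded P a haF r hrP hh with ⟨b, hb, hbF⟩ | ⟨c, hc, hcT⟩
    · exact hp b hb hbF
    · exact wfm_consistent P c hcT (hn c hc)
  exact h

end ASP

open ASP in
/-- Every answer set of the WF reduct `P^WF` of a finite ground normal
program `P` is an answer set of `P`. -/
theorem AS_WFreduct_subset_AS {α : Type} (P : Set (GRule α)) (hP : P.Finite) :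
    ∀ A ∈ AS (WFreduct P), A ∈ AS P := by
  intro A hA
  obtain ⟨hAmod, hAmin⟩ := hA
  have hcons := wfm_consistent P
  have hW3 := wfm_false_unfounded P
  have hW1 := wfm_true_derivable P
  have hL2 := suppOp_lfp_not_false P
  set W := WFM P with hWdef
  set L : Set α := OrderHom.lfp (suppOp P W.2) with hLdef
  -- A ∩ W.2 = ∅
  have hAF : ∀ a ∈ A, a ∉ W.2 := by
    intro a haA haF
    have hmod : IsModelPos (glReduct (WFreduct P) A) (A \ W.2) := by
      rintro hb ⟨ρ, hρR, hρneg, rfl⟩ hbody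
      obtain ⟨r, hrP, hsp, hsn, rfl⟩ := hρR
      have hhead : r.head ∈ A := by
        apply hAmod _ ⟨_, ⟨r, hrP, hsp, hsn, rfl⟩, hρneg, rfl⟩
        intro b hb
        exact (hbody b hb).1
      refine ⟨hhead, fun hhF => ?_⟩
      rcases hW3 r.head hhF r hrP rfl with ⟨b, hb, hbF⟩ | ⟨c, hc, hcT⟩
      · exact hsp b hb hbF
      · exact hsn c hc hcT
    have hss : (A \ W.2 : Set α) ⊂ A := by
      refine ⟨Set.diff_subset, fun hsub => ?_⟩
      exact (hsub haA).2 haF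
    exact hAmin _ hss hmod
  -- L ⊆ A
  have hLA : L ≤ A := by
    apply OrderHom.lfp_le
    rintro a ⟨r, hrP, rfl, hp, hn⟩
    have hsp : ∀ b ∈ r.pos, b ∉ W.2 := fun b hb => hAF b (hp b hb)
    have hsn : ∀ c ∈ r.neg, c ∉ W.1 := fun c hc hcT => hcons c hcT (hn c hc)
    apply hAmod (r.head, r.pos.filter (fun b => b ∉ W.1))
    · refine ⟨⟨r.head, r.pos.filter (fun b => b ∉ W.1), r.neg.filter (fun c => c ∉ W.2)⟩,
        ⟨r, hrP, hsp, hsn, rfl⟩, ?_, rfl⟩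
      intro c hc
      exact absurd (hn c (Finset.mem_filter.mp hc).1) (Finset.mem_filter.mp hc).2
    · intro b hb
      exact hp b (Finset.mem_filter.mp hb).1
  constructor
  · -- A is a model of the GL reduct of P
    rintro hb ⟨r, hrP, hneg, rfl⟩ hbody
    have hsp : ∀ b ∈ r.pos, b ∉ W.2 := fun b hb => hAF b (hbody b hb)
    have hsn : ∀ c ∈ r.neg, c ∉ W.1 := fun c hc hcT => hneg c hc (hLA (hW1 hcT))
    apply hAmod (r.head, r.pos.filter (fun b => b ∉ W.1))
    · refine ⟨⟨r.head, r.pos.filter (fun b => b ∉ W.1), r.neg.filter (fun c => c ∉ W.2)⟩,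
        ⟨r, hrP, hsp, hsn, rfl⟩, ?_, rfl⟩
      intro c hc
      exact hneg c (Finset.mem_filter.mp hc).1
    · intro b hb
      exact hbody b (Finset.mem_filter.mp hb).1
  · -- minimality
    intro B hBA hBmod
    apply hAmin B hBA
    have hLB : L ≤ B := by
      apply OrderHom.lfp_le
      rintro a ⟨r, hrP, rfl, hp, hn⟩
      apply hBmod (r.head, r.pos)
      · exact ⟨r, hrP, fun c hc hcA => hAF c hcA (hn c hc), rfl⟩
      · exact hp
    rintro hb ⟨ρ, hρR, hρneg, rfl⟩ hbody
    obtain ⟨r, hrP, hsp, hsn, rfl⟩ := hρR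
    apply hBmod (r.head, r.pos)
    · refine ⟨r, hrP, ?_, rfl⟩
      intro c hc hcA
      by_cases hcF : c ∈ W.2
      · exact hAF c hcA hcF
      · exact hρneg c (Finset.mem_filter.mpr ⟨hc, hcF⟩) hcA
    · intro b hb
      by_cases hbT : b ∈ W.1
      · exact hLB (hW1 hbT)
      · exact hbody b (Finset.mem_filter.mpr ⟨hb, hbT⟩)
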